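/- Let (x,y,z) ∈ 𝓗 with x, z ≥ 0, −x ≤ y < 0, and x ≤ √(z − xy). Then ℓ_X(x,y,z) = 2⌈2√(z−xy)⌉ − x + y. -/

import Mathlib

open scoped commutatorElement

/-- The two generators `a, b` of the discrete Heisenberg group. -/
inductive HGen : Type
  | a | b
deriving DecidableEq

/-- Relators of the discrete Heisenberg group `⟨a,b ∣ [a,[a,b]] = [b,[a,b]] = 1⟩`. -/
def Hrels : Set (FreeGroup HGen) :=
  { ⁅FreeGroup.of HGen.a, ⁅FreeGroup.of HGen.a, FreeGroup.of HGen.b⁆⁆,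
    ⁅FreeGroup.of HGen.b, ⁅FreeGroup.of HGen.a, FreeGroup.of HGen.b⁆⁆ }

/-- The discrete Heisenberg group `𝓗`. -/
abbrev Heis : Type := PresentedGroup Hrels

/-- The generator `a` of `𝓗`. -/
def Ha : Heis := PresentedGroup.of HGen.a

/-- The generator `b` of `𝓗`. -/
def Hb : Heis := PresentedGroup.of HGen.b

/-- The four letters of the alphabet `X = {a, a⁻¹, b, b⁻¹}`. -/
inductive XLetter : Type
  | a | A | b | B
deriving DecidableEq

/-- The element of `𝓗` represented by a letter of `X`. -/
def XLetter.toH : XLetter → Heis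
  | .a => Ha
  | .A => Ha⁻¹
  | .b => Hb
  | .B => Hb⁻¹

/-- The element of `𝓗` represented by a word over `X`. -/
def evalX (w : List XLetter) : Heis := (w.map XLetter.toH).prod

/-- The word `a^k` over `X`, for `k ∈ ℤ`. -/
def apow (k : ℤ) : List XLetter :=
  if 0 ≤ k then List.replicate k.toNat XLetter.a else List.replicate (-k).toNat XLetter.A

/-- The word `b^k` over `X`, for `k ∈ ℤ`. -/
def bpow (k : ℤ) : List XLetter :=
  if 0 ≤ k then List.replicate k.toNat XLetter.b else List.replicate (-k).toNat XLetter.B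

/-- The element `(x,y,z)` of `𝓗`, i.e. the element with normal form `[a,b]^z b^y a^x`. -/
def hElt (x y z : ℤ) : Heis := ⁅Ha, Hb⁆ ^ z * Hb ^ y * Ha ^ x

/-- The word length `ℓ_X(g)` of `g ∈ 𝓗` with respect to `X`. -/
noncomputable def lenX (g : Heis) : ℕ :=
  sInf { n | ∃ w : List XLetter, evalX w = g ∧ w.length = n }

/-- A word over `X` is geodesic if its length equals the word length of the
element it represents. -/
def IsGeodesicX (w : List XLetter) : Prop := w.length = lenX (evalX w)

/-!
Read a word over `X` as a lattice path: it represents the element `(x, y, z)` where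
`x, y` are its horizontal and vertical displacements and `z` is the sum of `x dy` along it.

Lower bound: closing a word for `(x, y, z)` by `b^{-y} a^{-x}` gives a closed path of length
`ℓ + |x| + |y|` enclosing area `A = z - x y`. For a closed path of length `L = h + v`
(`h` horizontal, `v` vertical letters) and horizontal width `W`, one has `2A ≤ v W` and
`2W ≤ h`, so `16 A ≤ 4 v h ≤ L²`; as `L` is even, `L ≥ 2⌈2√A⌉`.

Upper bound: write `⌈2√A⌉ = p + q` with `q ≤ p ≤ q + 1`, so that `(p - 1) q ≤ A ≤ p q`. The
hypothesis `x ≤ √A` gives `x ≤ q`, so the path can go around a `p × q` rectangle whose last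
side contains the closing segment, with a notch of depth `p q - A ≤ q` removing the excess area.
-/

lemma commute_commutator_Ha_Hb (g : Heis) : Commute ⁅Ha, Hb⁆ g := by
  have hgen : ∀ j : HGen, PresentedGroup.of j ∈ Subgroup.centralizer {⁅Ha, Hb⁆} := by
    intro j
    rw [Subgroup.mem_centralizer_singleton_iff]
    cases j
    · have h := PresentedGroup.one_of_mem (rels := Hrels) (Set.mem_insert _ _)
      rw [map_commutatorElement, map_commutatorElement] at h
      exact (commutatorElement_eq_one_iff_commute.1 h).eq
    · have h := PresentedGroup.one_of_mem (rels := Hrels) (Set.mem_insert_of_mem _ rfl)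
      rw [map_commutatorElement, map_commutatorElement] at h
      exact (commutatorElement_eq_one_iff_commute.1 h).eq
  exact (Subgroup.mem_centralizer_singleton_iff.1 (PresentedGroup.generated_by Hrels _ hgen g)).symm

lemma Ha_zpow_mul_Hb (m : ℤ) : Ha ^ m * Hb = ⁅Ha, Hb⁆ ^ m * Hb * Ha ^ m := by
  have h : SemiconjBy Hb Ha (⁅Ha, Hb⁆⁻¹ * Ha) := by
    rw [SemiconjBy, commutatorElement_def]
    group
  have hm := (h.zpow_right m).eq
  rw [((commute_commutator_Ha_Hb Ha).inv_left).mul_zpow, inv_zpow] at hm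
  rw [mul_assoc, hm, ← mul_assoc, ← mul_assoc, mul_inv_cancel, one_mul]
lemma hElt_zero : hElt 0 0 0 = 1 := by simp [hElt]

lemma hElt_mul_Ha (x y z : ℤ) : hElt x y z * Ha = hElt (x + 1) y z := by
  rw [hElt, hElt, zpow_add_one, mul_assoc]

lemma hElt_mul_Hb (x y z : ℤ) : hElt x y z * Hb = hElt x (y + 1) (z + x) := by
  have hc : Hb ^ y * ⁅Ha, Hb⁆ ^ x = ⁅Ha, Hb⁆ ^ x * Hb ^ y :=
    (((commute_commutator_Ha_Hb _).zpow_left x).eq).symm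
  calc hElt x y z * Hb = ⁅Ha, Hb⁆ ^ z * (Hb ^ y * ⁅Ha, Hb⁆ ^ x) * Hb * Ha ^ x := by
        rw [hElt, mul_assoc _ (Ha ^ x), Ha_zpow_mul_Hb]; simp only [mul_assoc]
    _ = hElt x (y + 1) (z + x) := by
        rw [hc, hElt, zpow_add, zpow_add_one]; simp only [mul_assoc]


/-- Integer upper unitriangular matrices `[[1, x, z], [0, 1, y], [0, 0, 1]]`. -/
@[ext]
structure H3 where
  x : ℤ
  y : ℤ
  z : ℤ

namespace H3

instance : Mul H3 := ⟨fun g h => ⟨g.x + h.x, g.y + h.y, g.z + h.z + g.x * h.y⟩⟩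
instance : One H3 := ⟨⟨0, 0, 0⟩⟩
instance : Inv H3 := ⟨fun g => ⟨-g.x, -g.y, -g.z + g.x * g.y⟩⟩

@[simp] lemma mul_x (g h : H3) : (g * h).x = g.x + h.x := rfl
@[simp] lemma mul_y (g h : H3) : (g * h).y = g.y + h.y := rfl
@[simp] lemma mul_z (g h : H3) : (g * h).z = g.z + h.z + g.x * h.y := rfl
@[simp] lemma one_x : (1 : H3).x = 0 := rfl
@[simp] lemma one_y : (1 : H3).y = 0 := rfl
@[simp] lemma one_z : (1 : H3).z = 0 := rfl
@[simp] lemma inv_x (g : H3) : g⁻¹.x = -g.x := rfl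
@[simp] lemma inv_y (g : H3) : g⁻¹.y = -g.y := rfl
@[simp] lemma inv_z (g : H3) : g⁻¹.z = -g.z + g.x * g.y := rfl

instance : Group H3 where
  mul_assoc a b c := by ext <;> simp <;> ring
  one_mul a := by ext <;> simp
  mul_one a := by ext <;> simp
  inv_mul_cancel a := by ext <;> simp

lemma zpow_eq (g : H3) (hg : g.x * g.y = 0) (k : ℤ) : g ^ k = ⟨k * g.x, k * g.y, k * g.z⟩ := by
  induction k using Int.induction_on with
  | zero => ext <;> simp
  | succ n ih =>
    rw [zpow_add_one, ih]
    ext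
    · simp; ring
    · simp; ring
    · simp; linear_combination n * hg
  | pred n ih =>
    rw [zpow_sub_one, ih]
    ext
    · simp; ring
    · simp; ring
    · simp; linear_combination (1 + n) * hg

end H3

def HGen.toH3 : HGen → H3
  | .a => ⟨1, 0, 0⟩
  | .b => ⟨0, 1, 0⟩

lemma Hrels_lift_eq_one (r : FreeGroup HGen) (hr : r ∈ Hrels) : FreeGroup.lift HGen.toH3 r = 1 := by
  rcases hr with rfl | rfl <;>
  · simp only [map_commutatorElement, FreeGroup.lift_apply_of]
    ext <;> simp [HGen.toH3, commutatorElement_def]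

noncomputable def toH3 : Heis →* H3 := PresentedGroup.toGroup Hrels_lift_eq_one

lemma toH3_hElt (x y z : ℤ) : toH3 (hElt x y z) = ⟨x, y, z⟩ := by
  have ha : toH3 Ha = ⟨1, 0, 0⟩ := PresentedGroup.toGroup.of Hrels_lift_eq_one
  have hb : toH3 Hb = ⟨0, 1, 0⟩ := PresentedGroup.toGroup.of Hrels_lift_eq_one
  have hc : toH3 ⁅Ha, Hb⁆ = ⟨0, 0, 1⟩ := by
    rw [map_commutatorElement, ha, hb]
    ext <;> simp [commutatorElement_def]
  rw [hElt, map_mul, map_mul, map_zpow, map_zpow, map_zpow, ha, hb, hc,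
    H3.zpow_eq _ rfl, H3.zpow_eq _ rfl, H3.zpow_eq _ rfl]
  ext <;> simp

lemma hElt_inj {x y z x' y' z' : ℤ} :
    hElt x y z = hElt x' y' z' ↔ x = x' ∧ y = y' ∧ z = z' := by
  constructor
  · intro h
    simpa [toH3_hElt] using congrArg toH3 h
  · rintro ⟨rfl, rfl, rfl⟩
    rfl

namespace XLetter

def dx : XLetter → ℤ
  | a => 1
  | A => -1
  | b => 0
  | B => 0

def dy : XLetter → ℤ
  | a => 0
  | A => 0
  | b => 1
  | B => -1

lemma dx_mul_dy (l : XLetter) : l.dx * l.dy = 0 := by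
  cases l <;> rfl

lemma abs_dx_add_abs_dy (l : XLetter) : |l.dx| + |l.dy| = 1 := by
  cases l <;> rfl

lemma even_one_add_dx_add_dy (l : XLetter) : Even (1 + l.dx + l.dy) := by
  cases l <;> decide

end XLetter

lemma hElt_mul_toH (x y z : ℤ) (l : XLetter) :
    hElt x y z * l.toH = hElt (x + l.dx) (y + l.dy) (z + l.dy * x) := by
  cases l
  · simp [XLetter.toH, XLetter.dx, XLetter.dy, hElt_mul_Ha]
  · rw [XLetter.toH, mul_inv_eq_iff_eq_mul, hElt_mul_Ha]
    simp [XLetter.dx, XLetter.dy]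
  · simp [XLetter.toH, XLetter.dx, XLetter.dy, hElt_mul_Hb, add_comm]
  · rw [XLetter.toH, mul_inv_eq_iff_eq_mul, hElt_mul_Hb]
    simp [XLetter.dx, XLetter.dy]

def hDisp (w : List XLetter) : ℤ := (w.map XLetter.dx).sum

def vDisp (w : List XLetter) : ℤ := (w.map XLetter.dy).sum

def hLength (w : List XLetter) : ℤ := (w.map fun l => |l.dx|).sum

def vLength (w : List XLetter) : ℤ := (w.map fun l => |l.dy|).sum

/-- The sum of `x dy` along the lattice path spelled by `w`, started at abscissa `t`. -/
def sweptArea : ℤ → List XLetter → ℤ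
  | _, [] => 0
  | t, l :: w => l.dy * t + sweptArea (t + l.dx) w

@[simp] lemma hDisp_nil : hDisp [] = 0 := rfl
@[simp] lemma vDisp_nil : vDisp [] = 0 := rfl
@[simp] lemma hLength_nil : hLength [] = 0 := rfl
@[simp] lemma vLength_nil : vLength [] = 0 := rfl
@[simp] lemma sweptArea_nil (t : ℤ) : sweptArea t [] = 0 := rfl

@[simp] lemma hDisp_cons (l : XLetter) (w : List XLetter) : hDisp (l :: w) = l.dx + hDisp w := by
  simp [hDisp]

@[simp] lemma vDisp_cons (l : XLetter) (w : List XLetter) : vDisp (l :: w) = l.dy + vDisp w := by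
  simp [vDisp]

@[simp] lemma hLength_cons (l : XLetter) (w : List XLetter) :
    hLength (l :: w) = |l.dx| + hLength w := by
  simp [hLength]

@[simp] lemma vLength_cons (l : XLetter) (w : List XLetter) :
    vLength (l :: w) = |l.dy| + vLength w := by
  simp [vLength]

@[simp] lemma sweptArea_cons (t : ℤ) (l : XLetter) (w : List XLetter) :
    sweptArea t (l :: w) = l.dy * t + sweptArea (t + l.dx) w := rfl

@[simp] lemma hDisp_append (w₁ w₂ : List XLetter) : hDisp (w₁ ++ w₂) = hDisp w₁ + hDisp w₂ := by
  simp [hDisp]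

@[simp] lemma vDisp_append (w₁ w₂ : List XLetter) : vDisp (w₁ ++ w₂) = vDisp w₁ + vDisp w₂ := by
  simp [vDisp]

@[simp] lemma hLength_append (w₁ w₂ : List XLetter) :
    hLength (w₁ ++ w₂) = hLength w₁ + hLength w₂ := by
  simp [hLength]

@[simp] lemma sweptArea_append (t : ℤ) (w₁ w₂ : List XLetter) :
    sweptArea t (w₁ ++ w₂) = sweptArea t w₁ + sweptArea (t + hDisp w₁) w₂ := by
  induction w₁ generalizing t with
  | nil => simp
  | cons l w ih => simp [ih, add_assoc]

lemma vLength_nonneg (w : List XLetter) : 0 ≤ vLength w :=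
  List.sum_nonneg (by simp)

lemma length_eq_hLength_add_vLength (w : List XLetter) :
    (w.length : ℤ) = hLength w + vLength w := by
  induction w with
  | nil => simp
  | cons l w ih => simp [ih]; linarith [l.abs_dx_add_abs_dy]

lemma even_length_add_hDisp_add_vDisp (w : List XLetter) :
    Even ((w.length : ℤ) + hDisp w + vDisp w) := by
  induction w with
  | nil => simp
  | cons l w ih =>
    have hsplit : ((l :: w).length : ℤ) + hDisp (l :: w) + vDisp (l :: w)
        = (w.length + hDisp w + vDisp w) + (1 + l.dx + l.dy) := by
      simp only [List.length_cons, Nat.cast_add, Nat.cast_one, hDisp_cons, vDisp_cons]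
      ring
    exact hsplit ▸ ih.add l.even_one_add_dx_add_dy

lemma abs_hDisp_le_hLength (w : List XLetter) : |hDisp w| ≤ hLength w := by
  induction w with
  | nil => simp
  | cons l w ih => simpa using (abs_add_le _ _).trans (add_le_add_right ih |l.dx|)

lemma hElt_mul_evalX (x y z : ℤ) (w : List XLetter) :
    hElt x y z * evalX w = hElt (x + hDisp w) (y + vDisp w) (z + sweptArea x w) := by
  induction w generalizing x y z with
  | nil => simp [evalX]
  | cons l w ih =>
    have hcons : evalX (l :: w) = l.toH * evalX w := by simp [evalX]
    rw [hcons, ← mul_assoc, hElt_mul_toH, ih]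
    simp only [hDisp_cons, vDisp_cons, sweptArea_cons, add_assoc]

lemma evalX_eq_hElt (w : List XLetter) : evalX w = hElt (hDisp w) (vDisp w) (sweptArea 0 w) := by
  simpa [hElt_zero] using hElt_mul_evalX 0 0 0 w

lemma hDisp_replicate (n : ℕ) (l : XLetter) : hDisp (List.replicate n l) = n * l.dx := by
  simp [hDisp]

lemma vDisp_replicate (n : ℕ) (l : XLetter) : vDisp (List.replicate n l) = n * l.dy := by
  simp [vDisp]

lemma sweptArea_replicate (t : ℤ) (n : ℕ) (l : XLetter) :
    sweptArea t (List.replicate n l) = n * l.dy * t := by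
  induction n generalizing t with
  | zero => simp
  | succ n ih =>
    rw [List.replicate_succ, sweptArea_cons, ih]
    push_cast
    linear_combination n * l.dx_mul_dy

@[simp] lemma hDisp_apow (k : ℤ) : hDisp (apow k) = k := by
  unfold apow; split_ifs <;> simp [hDisp_replicate, XLetter.dx] <;> omega

@[simp] lemma vDisp_apow (k : ℤ) : vDisp (apow k) = 0 := by
  unfold apow; split_ifs <;> simp [vDisp_replicate, XLetter.dy]

@[simp] lemma sweptArea_apow (t k : ℤ) : sweptArea t (apow k) = 0 := by
  unfold apow; split_ifs <;> simp [sweptArea_replicate, XLetter.dy]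

@[simp] lemma length_apow (k : ℤ) : (apow k).length = k.natAbs := by
  unfold apow; split_ifs <;> simp <;> omega

@[simp] lemma hDisp_bpow (k : ℤ) : hDisp (bpow k) = 0 := by
  unfold bpow; split_ifs <;> simp [hDisp_replicate, XLetter.dx]

@[simp] lemma vDisp_bpow (k : ℤ) : vDisp (bpow k) = k := by
  unfold bpow; split_ifs <;> simp [vDisp_replicate, XLetter.dy] <;> omega

@[simp] lemma sweptArea_bpow (t k : ℤ) : sweptArea t (bpow k) = k * t := by
  unfold bpow
  split_ifs with hk
  · simp [sweptArea_replicate, XLetter.dy, Int.toNat_of_nonneg hk]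
  · simp [sweptArea_replicate, XLetter.dy, Int.toNat_of_nonneg (by omega : 0 ≤ -k)]

@[simp] lemma length_bpow (k : ℤ) : (bpow k).length = k.natAbs := by
  unfold bpow; split_ifs <;> simp <;> omega

/-- Each vertical letter contributes `±t` with `t ∈ [m, M]`, i.e. `±(m + M)/2` up to `(M - m)/2`. -/
lemma abs_two_mul_sweptArea_sub_le {m M : ℤ} (w : List XLetter) (t : ℤ)
    (h : ∀ i ≤ w.length, m ≤ t + hDisp (w.take i) ∧ t + hDisp (w.take i) ≤ M) :
    |2 * sweptArea t w - (m + M) * vDisp w| ≤ vLength w * (M - m) := by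
  induction w generalizing t with
  | nil => simp
  | cons l w ih =>
    have ht : m ≤ t ∧ t ≤ M := by simpa using h 0 (Nat.zero_le _)
    have hw := ih (t + l.dx) fun i hi => by
      simpa [add_assoc] using h (i + 1) (by simpa using hi)
    have hl : |l.dy * (2 * t - (m + M))| ≤ |l.dy| * (M - m) := by
      rw [abs_mul]
      exact mul_le_mul_of_nonneg_left (abs_le.2 ⟨by linarith, by linarith⟩) (abs_nonneg _)
    calc |2 * sweptArea t (l :: w) - (m + M) * vDisp (l :: w)|
        = |l.dy * (2 * t - (m + M)) + (2 * sweptArea (t + l.dx) w - (m + M) * vDisp w)| := by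
          simp only [sweptArea_cons, vDisp_cons]; ring_nf
      _ ≤ |l.dy| * (M - m) + vLength w * (M - m) := (abs_add_le _ _).trans (add_le_add hl hw)
      _ = vLength (l :: w) * (M - m) := by rw [vLength_cons]; ring

/-- A closed path must travel the horizontal distance between any two of its points twice. -/
lemma two_mul_abs_hDisp_take_sub_le {u : List XLetter} (hu : hDisp u = 0) (i j : ℕ) :
    2 * |hDisp (u.take j) - hDisp (u.take i)| ≤ hLength u := by
  wlog hij : i ≤ j generalizing i j
  · rw [abs_sub_comm]
    exact this j i (le_of_not_ge hij)
  have htake : u.take j = u.take i ++ (u.take j).drop i := by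
    conv_lhs => rw [← List.take_append_drop i (u.take j)]
    rw [List.take_take, min_eq_left hij]
  have hsplit : u = u.take i ++ (u.take j).drop i ++ u.drop j := by
    rw [← htake, List.take_append_drop]
  have hx := congrArg hDisp hsplit
  have hl := congrArg hLength hsplit
  simp only [hDisp_append, hLength_append] at hx hl
  rw [htake, hDisp_append, add_sub_cancel_left]
  have hmid := abs_hDisp_le_hLength ((u.take j).drop i)
  have hout : |hDisp ((u.take j).drop i)| ≤ hLength (u.take i) + hLength (u.drop j) := by
    calc |hDisp ((u.take j).drop i)| = |hDisp (u.take i) + hDisp (u.drop j)| := by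
          rw [← abs_neg]; congr 1; linarith
      _ ≤ _ := (abs_add_le _ _).trans
          (add_le_add (abs_hDisp_le_hLength _) (abs_hDisp_le_hLength _))
  linarith

theorem sixteen_mul_sweptArea_le_sq_length {u : List XLetter} (hx : hDisp u = 0)
    (hy : vDisp u = 0) : 16 * sweptArea 0 u ≤ (u.length : ℤ) ^ 2 := by
  have hne : (Finset.range (u.length + 1)).Nonempty := Finset.nonempty_range_add_one
  obtain ⟨i₀, -, hi₀⟩ := Finset.exists_min_image _ (fun i => hDisp (u.take i)) hne
  obtain ⟨i₁, -, hi₁⟩ := Finset.exists_max_image _ (fun i => hDisp (u.take i)) hne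
  set m := hDisp (u.take i₀)
  set M := hDisp (u.take i₁)
  have harea := abs_two_mul_sweptArea_sub_le (m := m) (M := M) u 0 fun i hi =>
    ⟨by simpa using hi₀ i (by simpa using Nat.lt_succ_of_le hi),
      by simpa using hi₁ i (by simpa using Nat.lt_succ_of_le hi)⟩
  rw [hy, mul_zero, sub_zero] at harea
  have hwidth := two_mul_abs_hDisp_take_sub_le hx i₀ i₁
  have hv := vLength_nonneg u
  calc 16 * sweptArea 0 u ≤ 4 * (vLength u * (2 * (M - m))) := by
        linarith [le_abs_self (2 * sweptArea 0 u)]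
    _ ≤ 4 * (vLength u * hLength u) := by
        gcongr
        linarith [le_abs_self (M - m)]
    _ ≤ (hLength u + vLength u) ^ 2 := by nlinarith [sq_nonneg (hLength u - vLength u)]
    _ = (u.length : ℤ) ^ 2 := by rw [length_eq_hLength_add_vLength]

lemma ceil_two_mul_sqrt_le_iff (S : ℝ) (r : ℤ) : ⌈2 * √S⌉ ≤ r ↔ 0 ≤ r ∧ 4 * S ≤ r ^ 2 := by
  rw [Int.ceil_le, ← le_div_iff₀' two_pos, Real.sqrt_le_iff, div_pow]
  constructor <;> rintro ⟨h₁, h₂⟩ <;> constructor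
  · exact_mod_cast (by linarith : (0 : ℝ) ≤ r)
  · linarith
  · positivity
  · linarith

lemma two_mul_ceil_le_length_of_closed {u : List XLetter} (hx : hDisp u = 0) (hy : vDisp u = 0) :
    2 * ⌈2 * √(sweptArea 0 u : ℝ)⌉ ≤ u.length := by
  obtain ⟨t, ht⟩ := even_length_add_hDisp_add_vDisp u
  rw [hx, hy, add_zero, add_zero] at ht
  have hiso := sixteen_mul_sweptArea_le_sq_length hx hy
  have hceil : ⌈2 * √(sweptArea 0 u : ℝ)⌉ ≤ t := by
    refine (ceil_two_mul_sqrt_le_iff _ t).2 ⟨by omega, ?_⟩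
    exact_mod_cast (by nlinarith : 4 * sweptArea 0 u ≤ t ^ 2)
  omega

lemma two_mul_ceil_le_length_add_abs {x y z : ℤ} {w : List XLetter} (hw : evalX w = hElt x y z) :
    2 * ⌈2 * √((z : ℝ) - x * y)⌉ ≤ w.length + |x| + |y| := by
  rw [evalX_eq_hElt, hElt_inj] at hw
  obtain ⟨hx, hy, hz⟩ := hw
  have hclosed := two_mul_ceil_le_length_of_closed (u := w ++ (bpow (-y) ++ apow (-x)))
    (by simp [hx]) (by simp [hy])
  have harea : sweptArea 0 (w ++ (bpow (-y) ++ apow (-x))) = z - x * y := by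
    simp [hx, hz]; ring
  rw [harea] at hclosed
  push_cast at hclosed
  simpa [Int.natCast_natAbs, add_assoc, add_comm |y|] using hclosed

lemma exists_near_square_factors {S r : ℤ} (hS : 0 ≤ S) (hr : 0 ≤ r) (hle : 4 * S ≤ r ^ 2)
    (hmin : 0 < r → (r - 1) ^ 2 < 4 * S) :
    ∃ p q : ℤ, p + q = r ∧ q ≤ p ∧ p ≤ q + 1 ∧ (p - 1) * q ≤ S ∧ S ≤ p * q := by
  obtain ⟨t, rfl | rfl⟩ := Int.even_or_odd' r
  · refine ⟨t, t, by ring, le_rfl, by omega, ?_, by nlinarith⟩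
    rcases eq_or_lt_of_le (show 0 ≤ t by omega) with rfl | ht
    · simpa using hS
    · nlinarith [hmin (by omega)]
  · exact ⟨t + 1, t, by ring, by omega, le_rfl, by nlinarith [hmin (by omega)], by nlinarith⟩

/-- The path runs around a `p × q` rectangle with a notch of width `k ≤ 1` and depth `e` cut out
of its left side; closed up by `b^{-y} a^{-x}` it encloses area `p q - e = z - x y`. -/
lemma exists_word_of_near_square {x y z p q : ℤ} (hx : 0 ≤ x) (hxq : x ≤ q) (hqp : q ≤ p)
    (hyx : -x ≤ y) (hxS : x ^ 2 ≤ z - x * y) (hlow : (p - 1) * q ≤ z - x * y)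
    (hhigh : z - x * y ≤ p * q) :
    ∃ w, evalX w = hElt x y z ∧ (w.length : ℤ) = 2 * (p + q) - x + y := by
  set e := p * q - (z - x * y) with he
  set k := min e 1 with hk
  have he0 : 0 ≤ e := by linarith
  have heq : e ≤ q := by linarith [show (p - 1) * q = p * q - q by ring]
  have hek : e * k = e := by
    rcases (show e = 0 ∨ 1 ≤ e by omega) with h | h
    · simp [h]
    · rw [hk, min_eq_right h, mul_one]
  have hkpx : k ≤ p - x := by
    rcases eq_or_lt_of_le (hxq.trans hqp) with hpx | hpx
    · have hq : q = x := by omega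
      subst hpx hq
      have : e ≤ 0 := by nlinarith
      omega
    · omega
  refine ⟨apow (-(p - x - k)) ++ bpow (-e) ++ apow (-k) ++ bpow (e - q) ++ apow p ++ bpow (q + y),
    ?_, ?_⟩
  · rw [evalX_eq_hElt, hElt_inj]
    simp only [hDisp_append, vDisp_append, sweptArea_append, hDisp_apow, hDisp_bpow, vDisp_apow,
      vDisp_bpow, sweptArea_apow, sweptArea_bpow]
    refine ⟨by ring, by ring, by linear_combination he - hek⟩
  · simp only [List.length_append, length_apow, length_bpow]
    omega

lemma exists_word_length_eq {x y z : ℤ} (hx : 0 ≤ x) (hyx : -x ≤ y) (hxS : x ^ 2 ≤ z - x * y) :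
    ∃ w, evalX w = hElt x y z ∧ (w.length : ℤ) = 2 * ⌈2 * √((z : ℝ) - x * y)⌉ - x + y := by
  set r := ⌈2 * √((z : ℝ) - x * y)⌉
  have hcast : ((z - x * y : ℤ) : ℝ) = (z : ℝ) - x * y := by push_cast; ring
  obtain ⟨hr, hle⟩ := (ceil_two_mul_sqrt_le_iff _ r).1 le_rfl
  have hmin : 0 < r → (r - 1) ^ 2 < 4 * (z - x * y) := fun hpos => by
    by_contra h
    have := (ceil_two_mul_sqrt_le_iff ((z : ℝ) - x * y) (r - 1)).2
      ⟨by omega, by rw [← hcast]; exact_mod_cast not_lt.1 h⟩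
    omega
  rw [← hcast] at hle
  obtain ⟨p, q, hpq, hqp, hpq1, hlow, hhigh⟩ :=
    exists_near_square_factors (by nlinarith) hr (by exact_mod_cast hle) hmin
  have h2x : 2 * x ≤ r := by nlinarith
  obtain ⟨w, hw, hlen⟩ := exists_word_of_near_square hx (by omega) hqp hyx hxS hlow hhigh
  exact ⟨w, hw, by rw [hlen, hpq]⟩

lemma lenX_eq_of_forall_le {g : Heis} {n : ℤ} (hw : ∃ w, evalX w = g ∧ (w.length : ℤ) = n)
    (hmin : ∀ w, evalX w = g → n ≤ w.length) : (lenX g : ℤ) = n := by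
  obtain ⟨w, hw, rfl⟩ := hw
  have hle : lenX g ≤ w.length := Nat.sInf_le ⟨w, hw, rfl⟩
  obtain ⟨w', hw', hlen⟩ : lenX g ∈ {n | ∃ w, evalX w = g ∧ w.length = n} :=
    Nat.sInf_mem ⟨_, w, hw, rfl⟩
  have := hmin w' hw'
  omega

theorem lenX_case_II1_general (x y z : ℤ) (hy0 : y < 0) (hyx : -x ≤ y)
    (hsqrt : (x : ℝ) ≤ Real.sqrt ((z : ℝ) - (x : ℝ) * (y : ℝ))) :
    (lenX (hElt x y z) : ℤ) = 2 * ⌈2 * Real.sqrt ((z : ℝ) - (x : ℝ) * (y : ℝ))⌉ - x + y := by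
  have hx : 0 < x := by omega
  have hxS : x ^ 2 ≤ z - x * y := by
    have := (Real.le_sqrt' (by exact_mod_cast hx)).1 hsqrt
    exact_mod_cast this
  refine lenX_eq_of_forall_le (exists_word_length_eq hx.le hyx hxS) fun w hw => ?_
  have := two_mul_ceil_le_length_add_abs hw
  rw [abs_of_pos hx, abs_of_neg hy0] at this
  linarith

/-- If `x, z ≥ 0`, `−x ≤ y < 0` and `x ≤ √(z − xy)`, then
`ℓ_X(x,y,z) = 2⌈2√(z−xy)⌉ − x + y`. -/
theorem lenX_case_II1 (x y z : ℤ) (hx : 0 ≤ x) (hz : 0 ≤ z) (hy0 : y < 0) (hyx : -x ≤ y)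
    (hsqrt : (x : ℝ) ≤ Real.sqrt ((z : ℝ) - (x : ℝ) * (y : ℝ))) :
    (lenX (hElt x y z) : ℤ) = 2 * ⌈2 * Real.sqrt ((z : ℝ) - (x : ℝ) * (y : ℝ))⌉ - x + y :=
  lenX_case_II1_general x y z hy0 hyx hsqrt
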